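/- Let V be a finite-dimensional complex vector space, and let (A,B,v) and (A′,B′,v′) be two triples where A,B (respectively A′,B′) are commuting endomorphisms of V and v (respectively v′) is a cyclic vector for the pair. If {P ∈ ℂ[X,Y] : P(A,B) = 0} = {P ∈ ℂ[X,Y] : P(A′,B′) = 0}, then there exists a ℂ-linear automorphism g of V with g∘A∘g⁻¹ = A′, g∘B∘g⁻¹ = B′, and g(v) = v′. (Together with the converse implication, the punctual Hilbert scheme is in bijection with conjugation classes of commuting pairs with a cyclic vector.) -/

import Mathlib

open MvPolynomial

/-- Evaluation `P(A,B)` of a two-variable polynomial on a pair of endomorphisms. -/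
noncomputable def evalEnd {V : Type*} [AddCommGroup V] [Module ℂ V]
    (A B : Module.End ℂ V) (P : MvPolynomial (Fin 2) ℂ) : Module.End ℂ V :=
  ∑ d ∈ P.support, P.coeff d • (A ^ d 0 * B ^ d 1)

/-- `v` is a cyclic vector for the pair `(A, B)`: the span of `{A^i B^j v}` is all of `V`. -/
def IsCyclicVector {V : Type*} [AddCommGroup V] [Module ℂ V]
    (A B : Module.End ℂ V) (v : V) : Prop :=
  Submodule.span ℂ {w : V | ∃ i j : ℕ, w = (A ^ i * B ^ j) v} = ⊤

/-- Evaluation as an algebra homomorphism, for a commuting pair. -/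
noncomputable def evalHom {V : Type*} [AddCommGroup V] [Module ℂ V]
    (A B : Module.End ℂ V) (h : Commute A B) :
    MvPolynomial (Fin 2) ℂ →ₐ[ℂ] Module.End ℂ V :=
  AddMonoidAlgebra.lift ℂ (Module.End ℂ V) (Fin 2 →₀ ℕ)
    { toFun := fun d => A ^ (Multiplicative.toAdd d) 0 * B ^ (Multiplicative.toAdd d) 1
      map_one' := by simp
      map_mul' := fun d e => by
        simp only [toAdd_mul, Finsupp.add_apply, pow_add]
        rw [(Commute.pow_pow h.symm _ _).mul_mul_mul_comm, mul_assoc] }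

theorem evalHom_eq {V : Type*} [AddCommGroup V] [Module ℂ V]
    (A B : Module.End ℂ V) (h : Commute A B) (P : MvPolynomial (Fin 2) ℂ) :
    evalHom A B h P = evalEnd A B P := by
  show (AddMonoidAlgebra.lift ℂ (Module.End ℂ V) (Fin 2 →₀ ℕ)) _ P = _
  rw [AddMonoidAlgebra.lift_apply]
  rfl

theorem evalHom_X0 {V : Type*} [AddCommGroup V] [Module ℂ V]
    (A B : Module.End ℂ V) (h : Commute A B) : evalHom A B h (X 0) = A := by
  rw [evalHom_eq]
  simp [evalEnd, support_X, Finsupp.single_apply]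

theorem evalHom_X1 {V : Type*} [AddCommGroup V] [Module ℂ V]
    (A B : Module.End ℂ V) (h : Commute A B) : evalHom A B h (X 1) = B := by
  rw [evalHom_eq]
  simp [evalEnd, support_X, Finsupp.single_apply]

theorem evalHom_pow_pow {V : Type*} [AddCommGroup V] [Module ℂ V]
    (A B : Module.End ℂ V) (h : Commute A B) (i j : ℕ) :
    evalHom A B h (X 0 ^ i * X 1 ^ j) = A ^ i * B ^ j := by
  rw [map_mul, map_pow, map_pow, evalHom_X0, evalHom_X1]

/-- If `evalHom P` kills a cyclic vector, it is zero. -/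
theorem evalHom_eq_zero_of_apply {V : Type*} [AddCommGroup V] [Module ℂ V]
    (A B : Module.End ℂ V) (h : Commute A B) (v : V) (hv : IsCyclicVector A B v)
    (P : MvPolynomial (Fin 2) ℂ) (hP : evalHom A B h P v = 0) :
    evalHom A B h P = 0 := by
  apply LinearMap.ext
  intro w
  have hw : w ∈ Submodule.span ℂ {w : V | ∃ i j : ℕ, w = (A ^ i * B ^ j) v} := by
    rw [hv]; trivial
  induction hw using Submodule.span_induction with
  | mem x hx =>
      obtain ⟨i, j, rfl⟩ := hx
      have hc : evalHom A B h P * (A ^ i * B ^ j) = (A ^ i * B ^ j) * evalHom A B h P := by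
        rw [← evalHom_pow_pow A B h, ← map_mul, ← map_mul, mul_comm P]
      calc (evalHom A B h P) ((A ^ i * B ^ j) v)
          = (evalHom A B h P * (A ^ i * B ^ j)) v := rfl
        _ = ((A ^ i * B ^ j) * evalHom A B h P) v := by rw [hc]
        _ = (A ^ i * B ^ j) (evalHom A B h P v) := rfl
        _ = 0 := by rw [hP]; simp
  | zero => simp
  | add x y _ _ hx hy => simp [map_add, hx, hy]
  | smul c x _ hx => simp [map_smul, hx]

theorem stmt8 (V : Type*) [AddCommGroup V] [Module ℂ V] [FiniteDimensional ℂ V]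
    (A B A' B' : Module.End ℂ V) (v v' : V)
    (hAB : Commute A B) (hv : IsCyclicVector A B v)
    (hAB' : Commute A' B') (hv' : IsCyclicVector A' B' v')
    (hIdeals : {P : MvPolynomial (Fin 2) ℂ | evalEnd A B P = 0} =
               {P : MvPolynomial (Fin 2) ℂ | evalEnd A' B' P = 0}) :
    ∃ g : V ≃ₗ[ℂ] V,
      g.toLinearMap ∘ₗ A ∘ₗ g.symm.toLinearMap = A' ∧
      g.toLinearMap ∘ₗ B ∘ₗ g.symm.toLinearMap = B' ∧
      g v = v' := by
  -- the two evaluation-at-`v` linear maps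
  set Φ : MvPolynomial (Fin 2) ℂ →ₗ[ℂ] V :=
    (LinearMap.applyₗ v).comp (evalHom A B hAB).toLinearMap with hΦdef
  set Φ' : MvPolynomial (Fin 2) ℂ →ₗ[ℂ] V :=
    (LinearMap.applyₗ v').comp (evalHom A' B' hAB').toLinearMap with hΦ'def
  have hΦ : ∀ P, Φ P = evalHom A B hAB P v := fun P => rfl
  have hΦ' : ∀ P, Φ' P = evalHom A' B' hAB' P v' := fun P => rfl
  -- surjectivity
  have hsurj : Function.Surjective Φ := by
    rw [← LinearMap.range_eq_top, ← top_le_iff, ← hv]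
    apply Submodule.span_le.2
    rintro w ⟨i, j, rfl⟩
    exact ⟨X 0 ^ i * X 1 ^ j, by rw [hΦ, evalHom_pow_pow]⟩
  have hsurj' : Function.Surjective Φ' := by
    rw [← LinearMap.range_eq_top, ← top_le_iff, ← hv']
    apply Submodule.span_le.2
    rintro w ⟨i, j, rfl⟩
    exact ⟨X 0 ^ i * X 1 ^ j, by rw [hΦ', evalHom_pow_pow]⟩
  -- kernels
  have hker : ∀ P, Φ P = 0 ↔ evalEnd A B P = 0 := by
    intro P
    constructor
    · intro hP
      rw [← evalHom_eq A B hAB]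
      exact evalHom_eq_zero_of_apply A B hAB v hv P hP
    · intro hP
      rw [hΦ, evalHom_eq, hP]; rfl
  have hker' : ∀ P, Φ' P = 0 ↔ evalEnd A' B' P = 0 := by
    intro P
    constructor
    · intro hP
      rw [← evalHom_eq A' B' hAB']
      exact evalHom_eq_zero_of_apply A' B' hAB' v' hv' P hP
    · intro hP
      rw [hΦ', evalHom_eq, hP]; rfl
  have hKeq : LinearMap.ker Φ = LinearMap.ker Φ' := by
    ext P
    rw [LinearMap.mem_ker, LinearMap.mem_ker, hker, hker']
    exact Set.ext_iff.1 hIdeals P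
  -- the automorphism
  let e1 := Φ.quotKerEquivOfSurjective hsurj
  let e2 := Φ'.quotKerEquivOfSurjective hsurj'
  let q := Submodule.quotEquivOfEq _ _ hKeq
  let g : V ≃ₗ[ℂ] V := (e1.symm.trans q).trans e2
  have he1 : ∀ P, e1 (Submodule.Quotient.mk P) = Φ P := by
    intro P
    simp [e1, LinearMap.quotKerEquivOfSurjective, LinearMap.quotKerEquivRange]
  have he2 : ∀ P, e2 (Submodule.Quotient.mk P) = Φ' P := by
    intro P
    simp [e2, LinearMap.quotKerEquivOfSurjective, LinearMap.quotKerEquivRange]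
  have hg : ∀ P, g (Φ P) = Φ' P := by
    intro P
    have h1 : e1.symm (Φ P) = Submodule.Quotient.mk P := by
      rw [LinearEquiv.symm_apply_eq, he1]
    show e2 (q (e1.symm (Φ P))) = Φ' P
    rw [h1, Submodule.quotEquivOfEq_mk, he2]
  refine ⟨g, ?_, ?_, ?_⟩
  · apply LinearMap.ext
    intro w
    obtain ⟨P, hP⟩ := hsurj (g.symm w)
    have h1 : A (Φ P) = Φ (X 0 * P) := by
      rw [hΦ, hΦ, map_mul, evalHom_X0]; rfl
    have h2 : A' (Φ' P) = Φ' (X 0 * P) := by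
      rw [hΦ', hΦ', map_mul, evalHom_X0]; rfl
    have h3 : Φ' P = w := by rw [← hg, hP, g.apply_symm_apply]
    simp only [LinearMap.comp_apply, LinearEquiv.coe_coe]
    rw [← hP, h1, hg, ← h2, h3]
  · apply LinearMap.ext
    intro w
    obtain ⟨P, hP⟩ := hsurj (g.symm w)
    have h1 : B (Φ P) = Φ (X 1 * P) := by
      rw [hΦ, hΦ, map_mul, evalHom_X1]; rfl
    have h2 : B' (Φ' P) = Φ' (X 1 * P) := by
      rw [hΦ', hΦ', map_mul, evalHom_X1]; rfl
    have h3 : Φ' P = w := by rw [← hg, hP, g.apply_symm_apply]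
    simp only [LinearMap.comp_apply, LinearEquiv.coe_coe]
    rw [← hP, h1, hg, ← h2, h3]
  · have h1 : v = Φ 1 := by rw [hΦ, map_one]; rfl
    have h2 : Φ' 1 = v' := by rw [hΦ', map_one]; rfl
    rw [h1, hg, h2]
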